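/- arXiv:2408.14115 — 6 statements merged into one kernel-verified Lean document; each statement's English description precedes it below -/
import Mathlib

section
/- Power balance for port-Hamiltonian descriptor systems: let (E,A,B,C,D) be a port-Hamiltonian descriptor system with pH decomposition matrices J, R, Q ∈ ℝ^{n×n}, G, P ∈ ℝ^{n×m} and S = (D+D^T)/2, and let H(x) = (1/2)·x^T E^T Q x. If x : ℝ → ℝ^n is differentiable at t, u : ℝ → ℝ^m, y(t) = C x(t) + D u(t), and E x'(t) = A x(t) + B u(t), then the function t ↦ H(x(t)) is differentiable at t with derivative equal to −[x(t); u(t)]^T · [[Q^T R Q, Q^T P],[P^T Q, S]] · [x(t); u(t)] + y(t)^T u(t). -/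
/-!
Because `Eᵀ Q` is symmetric, the derivative of `H(x) = ½ xᵀ Eᵀ Q x` along `x` is
`xᵀ Eᵀ Q ẋ = (Q x)ᵀ (E ẋ) = (Q x)ᵀ (A x + B u)`. Inserting `A = (J - R) Q`, `B = G - P`, the
skew-symmetric `J` contributes `(Q x)ᵀ J (Q x) = 0`, and the remaining terms regroup into minus
the dissipation form `[x; u]ᵀ [[Qᵀ R Q, Qᵀ P], [Pᵀ Q, S]] [x; u]` plus the supplied power
`yᵀ u = ((G + P)ᵀ Q x + D u)ᵀ u`, using `uᵀ S u = uᵀ D u`.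
-/

open Matrix
open scoped ComplexOrder

/-- View a real matrix as a complex matrix. -/
noncomputable def toC {k l : Type*} (M : Matrix k l ℝ) : Matrix k l ℂ :=
  M.map (fun x => (x : ℂ))

/-- The matrix pencil `s E - A`, viewed over `ℂ`. -/
noncomputable def pencil {n : ℕ} (E A : Matrix (Fin n) (Fin n) ℝ) (s : ℂ) :
    Matrix (Fin n) (Fin n) ℂ :=
  s • toC E - toC A

/-- The transfer function `T(s) = C (sE - A)⁻¹ B + D` of the descriptor system. -/
noncomputable def transfer {n m : ℕ} (E A : Matrix (Fin n) (Fin n) ℝ)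
    (B : Matrix (Fin n) (Fin m) ℝ) (C : Matrix (Fin m) (Fin n) ℝ)
    (D : Matrix (Fin m) (Fin m) ℝ) (s : ℂ) : Matrix (Fin m) (Fin m) ℂ :=
  toC C * (pencil E A s)⁻¹ * toC B + toC D

/-- A descriptor system is positive real if the pencil is invertible on the open right
half-plane and `T(s) + T(s)ᴴ` is positive semidefinite there. -/
def PositiveReal {n m : ℕ} (E A : Matrix (Fin n) (Fin n) ℝ)
    (B : Matrix (Fin n) (Fin m) ℝ) (C : Matrix (Fin m) (Fin n) ℝ)
    (D : Matrix (Fin m) (Fin m) ℝ) : Prop :=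
  ∀ s : ℂ, 0 < s.re → (pencil E A s).det ≠ 0 ∧
    (transfer E A B C D s + (transfer E A B C D s)ᴴ).PosSemidef

/-- Complete controllability: `[αE - βA, B]` has full row rank for all `(α,β) ≠ (0,0)`. -/
def CompletelyControllable {n m : ℕ} (E A : Matrix (Fin n) (Fin n) ℝ)
    (B : Matrix (Fin n) (Fin m) ℝ) : Prop :=
  ∀ α β : ℂ, ¬(α = 0 ∧ β = 0) →
    (fromCols (α • toC E - β • toC A) (toC B)).rank = n

/-- Complete observability: `[αE - βA; C]` has full column rank for all `(α,β) ≠ (0,0)`. -/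
def CompletelyObservable {n m : ℕ} (E A : Matrix (Fin n) (Fin n) ℝ)
    (C : Matrix (Fin m) (Fin n) ℝ) : Prop :=
  ∀ α β : ℂ, ¬(α = 0 ∧ β = 0) →
    (fromRows (α • toC E - β • toC A) (toC C)).rank = n

/-- A descriptor system `(E,A,B,C,D)` is port-Hamiltonian if it admits a pH decomposition. -/
def IsPortHamiltonian {n m : ℕ} (E A : Matrix (Fin n) (Fin n) ℝ)
    (B : Matrix (Fin n) (Fin m) ℝ) (C : Matrix (Fin m) (Fin n) ℝ)
    (D : Matrix (Fin m) (Fin m) ℝ) : Prop :=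
  ∃ (J R Q : Matrix (Fin n) (Fin n) ℝ) (G P : Matrix (Fin n) (Fin m) ℝ),
    A = (J - R) * Q ∧ B = G - P ∧ C = (G + P)ᵀ * Q ∧ Jᵀ = -J ∧
    (Eᵀ * Q).PosSemidef ∧
    (fromBlocks (Qᵀ * R * Q) (Qᵀ * P) (Pᵀ * Q) ((1/2 : ℝ) • (D + Dᵀ))).PosSemidef

/-- The KYP block matrix `[[AᵀQ + QᵀA, QᵀB - Cᵀ], [BᵀQ - C, -D - Dᵀ]]`. -/
def KYPmatrix {n m : ℕ} (A : Matrix (Fin n) (Fin n) ℝ)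
    (B : Matrix (Fin n) (Fin m) ℝ) (C : Matrix (Fin m) (Fin n) ℝ)
    (D : Matrix (Fin m) (Fin m) ℝ) (Q : Matrix (Fin n) (Fin n) ℝ) :
    Matrix (Fin n ⊕ Fin m) (Fin n ⊕ Fin m) ℝ :=
  fromBlocks (Aᵀ * Q + Qᵀ * A) (Qᵀ * B - Cᵀ) (Bᵀ * Q - C) (-D - Dᵀ)

section
variable {ι κ R : Type*} [Fintype ι] [Fintype κ]

theorem Matrix.dotProduct_mulVec_self_eq_zero_of_transpose_eq_neg [CommRing R]
    [IsAddTorsionFree R] {J : Matrix ι ι R} (hJ : Jᵀ = -J) (v : ι → R) : v ⬝ᵥ J *ᵥ v = 0 := by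
  have h := dotProduct_transpose_mulVec J v v
  rw [hJ, neg_mulVec, dotProduct_neg] at h
  exact neg_eq_self.mp h

theorem Matrix.dotProduct_half_add_transpose_mulVec_self [Field R] [CharZero R] (D : Matrix ι ι R)
    (v : ι → R) :
    v ⬝ᵥ ((1/2 : R) • (D + Dᵀ)) *ᵥ v = v ⬝ᵥ D *ᵥ v := by
  rw [smul_mulVec, dotProduct_smul, add_mulVec, dotProduct_add, dotProduct_transpose_mulVec,
    smul_eq_mul]
  ring

theorem Matrix.sumElim_dotProduct_fromBlocks_mulVec [CommSemiring R] (A : Matrix ι ι R)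
    (B : Matrix ι κ R) (C : Matrix κ ι R) (D : Matrix κ κ R) (a : ι → R) (b : κ → R) :
    Sum.elim a b ⬝ᵥ fromBlocks A B C D *ᵥ Sum.elim a b
      = a ⬝ᵥ A *ᵥ a + a ⬝ᵥ B *ᵥ b + (b ⬝ᵥ C *ᵥ a + b ⬝ᵥ D *ᵥ b) := by
  rw [fromBlocks_mulVec, sumElim_dotProduct_sumElim, dotProduct_add, dotProduct_add,
    Sum.elim_comp_inl, Sum.elim_comp_inr]

end

section
variable {𝕜 ι κ : Type*} [NontriviallyNormedField 𝕜] [Fintype ι]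

theorem HasDerivAt.dotProduct {f g : 𝕜 → ι → 𝕜} {f' g' : ι → 𝕜} {t : 𝕜}
    (hf : HasDerivAt f f' t) (hg : HasDerivAt g g' t) :
    HasDerivAt (fun τ => f τ ⬝ᵥ g τ) (f' ⬝ᵥ g t + f t ⬝ᵥ g') t := by
  have hsum := HasDerivAt.fun_sum (u := Finset.univ)
    fun i _ => (hasDerivAt_pi.1 hf i).mul (hasDerivAt_pi.1 hg i)
  simpa [_root_.dotProduct, Finset.sum_add_distrib] using hsum

theorem HasDerivAt.mulVec (M : Matrix κ ι 𝕜) {x : 𝕜 → ι → 𝕜} {x' : ι → 𝕜} {t : 𝕜}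
    (hx : HasDerivAt x x' t) : HasDerivAt (fun τ => M *ᵥ x τ) (M *ᵥ x') t :=
  hasDerivAt_pi.2 fun i => by
    have h := (hasDerivAt_const t (M i)).dotProduct hx
    rw [zero_dotProduct, zero_add] at h
    exact h

theorem HasDerivAt.dotProduct_mulVec_self {M : Matrix ι ι 𝕜} (hM : M.IsSymm) {x : 𝕜 → ι → 𝕜}
    {x' : ι → 𝕜} {t : 𝕜} (hx : HasDerivAt x x' t) :
    HasDerivAt (fun τ => x τ ⬝ᵥ M *ᵥ x τ) (2 * (x t ⬝ᵥ M *ᵥ x')) t := by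
  convert hx.dotProduct (hx.mulVec M) using 1
  rw [← dotProduct_transpose_mulVec, hM.eq]
  ring

end

theorem power_balance_of_transpose_eq_neg {ι κ K : Type*} [Fintype ι] [Fintype κ] [Field K]
    [CharZero K] {J : Matrix ι ι K} (hJ : Jᵀ = -J) (R Q : Matrix ι ι K) (G P : Matrix ι κ K)
    (D : Matrix κ κ K) (a : ι → K) (b : κ → K) :
    Q *ᵥ a ⬝ᵥ (((J - R) * Q) *ᵥ a + (G - P) *ᵥ b)
      = -(Sum.elim a b ⬝ᵥ
          fromBlocks (Qᵀ * R * Q) (Qᵀ * P) (Pᵀ * Q) ((1/2 : K) • (D + Dᵀ)) *ᵥ Sum.elim a b)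
        + (((G + P)ᵀ * Q) *ᵥ a + D *ᵥ b) ⬝ᵥ b := by
  rw [sumElim_dotProduct_fromBlocks_mulVec, dotProduct_half_add_transpose_mulVec_self]
  simp only [← mulVec_mulVec, dotProduct_transpose_mulVec, dotProduct_comm _ b,
    sub_mulVec, add_mulVec, dotProduct_add, dotProduct_sub,
    dotProduct_mulVec_self_eq_zero_of_transpose_eq_neg hJ]
  rw [dotProduct_comm (R *ᵥ _), dotProduct_comm (P *ᵥ b)]
  ring

theorem power_balance_pH_general {n m : ℕ}
    (E A J R Q : Matrix (Fin n) (Fin n) ℝ)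
    (B G P : Matrix (Fin n) (Fin m) ℝ)
    (C : Matrix (Fin m) (Fin n) ℝ) (D : Matrix (Fin m) (Fin m) ℝ)
    (hA : A = (J - R) * Q) (hB : B = G - P) (hC : C = (G + P)ᵀ * Q)
    (hJ : Jᵀ = -J) (hEQ : (Eᵀ * Q).PosSemidef)
    (x : ℝ → Fin n → ℝ) (u : ℝ → Fin m → ℝ) (y : ℝ → Fin m → ℝ) (t : ℝ)
    (xd : Fin n → ℝ) (hx : HasDerivAt x xd t)
    (hy : y t = C.mulVec (x t) + D.mulVec (u t))
    (hode : E.mulVec xd = A.mulVec (x t) + B.mulVec (u t)) :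
    HasDerivAt (fun τ => (1/2 : ℝ) * (x τ ⬝ᵥ (Eᵀ * Q).mulVec (x τ)))
      (-(Sum.elim (x t) (u t) ⬝ᵥ
          (fromBlocks (Qᵀ * R * Q) (Qᵀ * P) (Pᵀ * Q)
            ((1/2 : ℝ) • (D + Dᵀ))).mulVec (Sum.elim (x t) (u t)))
        + y t ⬝ᵥ u t) t := by
  have hsymm : (Eᵀ * Q).IsSymm := isHermitian_iff_isSymm.mp hEQ.isHermitian
  have hpower : x t ⬝ᵥ (Eᵀ * Q) *ᵥ xd = Q *ᵥ x t ⬝ᵥ E *ᵥ xd := by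
    rw [← hsymm.eq, transpose_mul, transpose_transpose, ← mulVec_mulVec,
      dotProduct_transpose_mulVec, dotProduct_comm]
  refine ((hx.dotProduct_mulVec_self hsymm).const_mul (1/2 : ℝ)).congr_deriv ?_
  rw [← mul_assoc, one_div_mul_cancel two_ne_zero, one_mul, hpower, hode, hA, hB, hy, hC,
    power_balance_of_transpose_eq_neg hJ]

/-- Power balance equation for port-Hamiltonian descriptor systems. -/
theorem power_balance_pH {n m : ℕ}
    (E A J R Q : Matrix (Fin n) (Fin n) ℝ)
    (B G P : Matrix (Fin n) (Fin m) ℝ)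
    (C : Matrix (Fin m) (Fin n) ℝ) (D : Matrix (Fin m) (Fin m) ℝ)
    (hA : A = (J - R) * Q) (hB : B = G - P) (hC : C = (G + P)ᵀ * Q)
    (hJ : Jᵀ = -J) (hEQ : (Eᵀ * Q).PosSemidef)
    (hblock : (fromBlocks (Qᵀ * R * Q) (Qᵀ * P) (Pᵀ * Q)
      ((1/2 : ℝ) • (D + Dᵀ))).PosSemidef)
    (x : ℝ → Fin n → ℝ) (u : ℝ → Fin m → ℝ) (y : ℝ → Fin m → ℝ) (t : ℝ)
    (xd : Fin n → ℝ) (hx : HasDerivAt x xd t)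
    (hy : y t = C.mulVec (x t) + D.mulVec (u t))
    (hode : E.mulVec xd = A.mulVec (x t) + B.mulVec (u t)) :
    HasDerivAt (fun τ => (1/2 : ℝ) * (x τ ⬝ᵥ (Eᵀ * Q).mulVec (x τ)))
      (-(Sum.elim (x t) (u t) ⬝ᵥ
          (fromBlocks (Qᵀ * R * Q) (Qᵀ * P) (Pᵀ * Q)
            ((1/2 : ℝ) • (D + Dᵀ))).mulVec (Sum.elim (x t) (u t)))
        + y t ⬝ᵥ u t) t :=
  power_balance_pH_general E A J R Q B G P C D hA hB hC hJ hEQ x u y t xd hx hy hode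
end

section
/- Spectrum of a regular port-Hamiltonian pencil lies in the closed left half-plane: let E, J, R, Q ∈ ℝ^{n×n} and A = (J−R)Q, where J^T = −J, Q^T E = E^T Q is positive semidefinite, Q^T R Q is symmetric positive semidefinite, and the pencil (E,A) is regular, i.e. det(αE − βA) ≠ 0 for some (α,β) ∈ ℂ². Then every λ ∈ ℂ with det(λE − A) = 0 satisfies Re(λ) ≤ 0. -/
open Matrix
open scoped ComplexOrder

/-! If `(λE - A)x = 0` with `A = (J - R)Q`, multiplying by `x*Qᴴ` gives
`λ x*(EᴴQ)x = x*(QᴴJQ)x - x*(QᴴRQ)x`, whose first term on the right is purely imaginary; hence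
`Re λ · x*(EᴴQ)x = -x*(QᴴRQ)x ≤ 0`. For `Re λ > 0` this forces `EᴴQx = 0`, so `x` lies in the
kernel of `Qᴴ(αE - βA)` for every `(α, β)`. That matrix also kills `ker Q`, and when `αE - βA` is
invertible its kernel has the dimension of `ker Qᴴ`, i.e. of `ker Q`; so `Qx = 0`. Then `Ax = 0`
and `Ex = 0`, and `x` is a common kernel vector of the whole pencil, contradicting regularity. -/

section ToC

variable {k l m : Type*}

theorem toC_mul [Fintype l] (M : Matrix k l ℝ) (N : Matrix l m ℝ) :
    toC (M * N) = toC M * toC N :=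
  Matrix.map_mul (f := Complex.ofRealHom)

theorem toC_sub (M N : Matrix k l ℝ) : toC (M - N) = toC M - toC N :=
  Matrix.map_sub _ Complex.ofReal_sub M N

theorem toC_neg (M : Matrix k l ℝ) : toC (-M) = -toC M :=
  Matrix.map_neg _ Complex.ofReal_neg M

theorem conjTranspose_toC (M : Matrix k l ℝ) : (toC M)ᴴ = toC Mᵀ := by
  ext i j
  simp [toC]

open scoped MatrixOrder in
theorem Matrix.PosSemidef.toC [Fintype k] {M : Matrix k k ℝ} (hM : M.PosSemidef) :
    (toC M).PosSemidef := by
  classical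
  obtain ⟨B, rfl⟩ := CStarAlgebra.nonneg_iff_eq_star_mul_self.mp hM.nonneg
  rw [star_eq_conjTranspose, conjTranspose_eq_transpose_of_trivial, toC_mul, ← conjTranspose_toC]
  exact posSemidef_conjTranspose_mul_self _

end ToC

namespace Matrix

theorem ker_mulVecLin_eq_of_le_of_rank_le {K m m' n : Type*} [Field K] [Fintype n]
    {A : Matrix m n K} {Q : Matrix m' n K}
    (hle : LinearMap.ker Q.mulVecLin ≤ LinearMap.ker A.mulVecLin) (hrank : Q.rank ≤ A.rank) :
    LinearMap.ker A.mulVecLin = LinearMap.ker Q.mulVecLin := by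
  refine (Submodule.eq_of_le_of_finrank_le hle ?_).symm
  have hA := LinearMap.finrank_range_add_finrank_ker A.mulVecLin
  have hQ := LinearMap.finrank_range_add_finrank_ker Q.mulVecLin
  rw [← rank] at hA hQ
  omega

theorem star_dotProduct_mulVec_self {α n : Type*} [Fintype n] [CommSemiring α] [StarRing α]
    (M : Matrix n n α) (x : n → α) :
    star (star x ⬝ᵥ M *ᵥ x) = star x ⬝ᵥ Mᴴ *ᵥ x := by
  rw [← star_dotProduct, star_mulVec, ← dotProduct_mulVec]

theorem IsHermitian.conjTranspose_mul_comm {α m n : Type*} [Fintype m] [NonUnitalCommSemiring α]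
    [StarRing α] {A : Matrix m n α} {B : Matrix m n α} (h : (Aᴴ * B).IsHermitian) :
    Bᴴ * A = Aᴴ * B := by
  simpa only [IsHermitian, conjTranspose_mul, conjTranspose_conjTranspose] using h

end Matrix

namespace PortHamiltonian

open Matrix

variable {ι : Type*} [Fintype ι] {E J R Q : Matrix ι ι ℂ} {s : ℂ} {x : ι → ℂ}

theorem re_mul_dotProduct_mulVec_eq_neg (hJ : Jᴴ = -J)
    (hEQ : (Eᴴ * Q).IsHermitian) (hR : (Qᴴ * R * Q).IsHermitian)
    (hx : (s • E - (J - R) * Q) *ᵥ x = 0) :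
    (s.re : ℂ) * (star x ⬝ᵥ (Eᴴ * Q) *ᵥ x) = -(star x ⬝ᵥ (Qᴴ * R * Q) *ᵥ x) := by
  set h := star x ⬝ᵥ (Eᴴ * Q) *ᵥ x
  set d := star x ⬝ᵥ (Qᴴ * R * Q) *ᵥ x
  set j := star x ⬝ᵥ (Qᴴ * J * Q) *ᵥ x
  have hQE := hEQ.conjTranspose_mul_comm
  have balance : s * h = j - d := by
    have := congrArg (star x ⬝ᵥ Qᴴ *ᵥ ·) hx
    simp only [mulVec_zero, dotProduct_zero, sub_mulVec, mulVec_sub, dotProduct_sub, smul_mulVec,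
      mulVec_smul, dotProduct_smul, smul_eq_mul, mulVec_mulVec, ← Matrix.mul_assoc, hQE,
      Matrix.sub_mul] at this
    linear_combination this
  have hj : star j = -j := by
    rw [star_dotProduct_mulVec_self, conjTranspose_mul, conjTranspose_mul, hJ,
      conjTranspose_conjTranspose, Matrix.neg_mul, Matrix.mul_neg, neg_mulVec, dotProduct_neg,
      ← Matrix.mul_assoc]
  have hh : star h = h := by rw [star_dotProduct_mulVec_self, hEQ.eq]
  have hd : star d = d := by rw [star_dotProduct_mulVec_self, hR.eq]
  have balance' : star s * h = -j - d := by
    simpa only [star_mul', star_sub, hh, hd, hj] using congrArg star balance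
  have hre : (s.re : ℂ) = (s + star s) / 2 := by
    rw [Complex.star_def, Complex.add_conj]; push_cast; ring
  rw [hre]
  linear_combination (balance + balance') / 2

theorem mulVec_eq_zero_of_re_pos (hJ : Jᴴ = -J) (hEQ : (Eᴴ * Q).PosSemidef)
    (hR : (Qᴴ * R * Q).PosSemidef) (hs : 0 < s.re) (hx : (s • E - (J - R) * Q) *ᵥ x = 0) :
    (Eᴴ * Q) *ᵥ x = 0 := by
  have balance := re_mul_dotProduct_mulVec_eq_neg hJ hEQ.isHermitian hR.isHermitian hx
  have hzero : (s.re : ℂ) * (star x ⬝ᵥ (Eᴴ * Q) *ᵥ x) = 0 :=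
    le_antisymm (balance ▸ neg_nonpos.mpr (hR.dotProduct_mulVec_nonneg x))
      (mul_nonneg (by exact_mod_cast hs.le) (hEQ.dotProduct_mulVec_nonneg x))
  exact (hEQ.dotProduct_mulVec_zero_iff x).mp
    ((mul_eq_zero.mp hzero).resolve_left (by exact_mod_cast hs.ne'))

theorem mulVec_eq_zero_of_det_ne_zero [DecidableEq ι] {G : Matrix ι ι ℂ} {α β : ℂ}
    (hQE : Qᴴ * E = Eᴴ * Q) (hM : (α • E - β • (G * Q)).det ≠ 0)
    (hEx : (Qᴴ * E) *ᵥ x = 0) (hGQx : (Qᴴ * (G * Q)) *ᵥ x = 0) : Q *ᵥ x = 0 := by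
  have hker_of : ∀ w, (Qᴴ * E) *ᵥ w = 0 → (Qᴴ * (G * Q)) *ᵥ w = 0 →
      w ∈ LinearMap.ker (Qᴴ * (α • E - β • (G * Q))).mulVecLin := fun w hEw hGQw => by
    rw [LinearMap.mem_ker, mulVecLin_apply, Matrix.mul_sub, Matrix.mul_smul, Matrix.mul_smul,
      sub_mulVec, smul_mulVec, smul_mulVec, hEw, hGQw, smul_zero, smul_zero, sub_zero]
  have hker := ker_mulVecLin_eq_of_le_of_rank_le
    (fun w (hw : Q *ᵥ w = 0) => hker_of w
      (by rw [hQE, ← mulVec_mulVec, hw, mulVec_zero])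
      (by rw [← mulVec_mulVec, ← mulVec_mulVec, hw, mulVec_zero, mulVec_zero]))
    (by rw [rank_mul_eq_left_of_det_ne_zero _ _ hM, rank_conjTranspose])
  simpa only [hker, LinearMap.mem_ker, mulVecLin_apply] using hker_of x hEx hGQx

theorem re_nonpos_of_det_eq_zero [DecidableEq ι] (hJ : Jᴴ = -J) (hEQ : (Eᴴ * Q).PosSemidef)
    (hR : (Qᴴ * R * Q).PosSemidef)
    (hreg : ∃ α β : ℂ, (α • E - β • ((J - R) * Q)).det ≠ 0)
    (hs : (s • E - (J - R) * Q).det = 0) : s.re ≤ 0 := by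
  obtain ⟨α, β, hM⟩ := hreg
  by_contra! hpos
  obtain ⟨x, hx0, hx⟩ := exists_mulVec_eq_zero_iff.mpr hs
  have hQE := hEQ.isHermitian.conjTranspose_mul_comm
  have hAx : ((J - R) * Q) *ᵥ x = s • E *ᵥ x := by
    rwa [sub_mulVec, smul_mulVec, sub_eq_zero, eq_comm] at hx
  have hEx : (Qᴴ * E) *ᵥ x = 0 := hQE ▸ mulVec_eq_zero_of_re_pos hJ hEQ hR hpos hx
  have hQx : Q *ᵥ x = 0 := mulVec_eq_zero_of_det_ne_zero hQE hM hEx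
    (by rw [← mulVec_mulVec, hAx, mulVec_smul, mulVec_mulVec, hEx, smul_zero])
  have hAx0 : ((J - R) * Q) *ᵥ x = 0 := by rw [← mulVec_mulVec, hQx, mulVec_zero]
  have hEx0 : E *ᵥ x = 0 :=
    (smul_eq_zero.mp (hAx.symm.trans hAx0)).resolve_left fun h => by simp [h] at hpos
  exact hM (exists_mulVec_eq_zero_iff.mp ⟨x, hx0, by
    rw [sub_mulVec, smul_mulVec, smul_mulVec, hEx0, hAx0, smul_zero, smul_zero, sub_zero]⟩)

end PortHamiltonian

/-- Finite eigenvalues of a regular pH pencil lie in the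
closed left half-plane. -/
theorem pH_spectrum_in_closed_left_halfplane {n : ℕ}
    (E J R Q : Matrix (Fin n) (Fin n) ℝ)
    (hJ : Jᵀ = -J) (hEQ : (Eᵀ * Q).PosSemidef) (hR : (Qᵀ * R * Q).PosSemidef)
    (hreg : ∃ α β : ℂ, (α • toC E - β • toC ((J - R) * Q)).det ≠ 0) :
    ∀ lam : ℂ, (lam • toC E - toC ((J - R) * Q)).det = 0 → lam.re ≤ 0 := by
  intro lam hdet
  have hJ' : (toC J)ᴴ = -toC J := by rw [conjTranspose_toC, hJ, toC_neg]
  have hEQ' : ((toC E)ᴴ * toC Q).PosSemidef := by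
    rw [conjTranspose_toC, ← toC_mul]; exact hEQ.toC
  have hR' : ((toC Q)ᴴ * toC R * toC Q).PosSemidef := by
    rw [conjTranspose_toC, ← toC_mul, ← toC_mul]; exact hR.toC
  rw [toC_mul, toC_sub] at hreg hdet
  exact PortHamiltonian.re_nonpos_of_det_eq_zero hJ' hEQ' hR' hreg hdet
end

section
/- Index of a regular port-Hamiltonian pencil is at most two: let E, J, R, Q ∈ ℝ^{n×n} and A = (J−R)Q, where J^T = −J, Q^T E = E^T Q is positive semidefinite, Q^T R Q is symmetric positive semidefinite, and the pencil (E,A) is regular. Then there exist nonnegative integers r, q with r + q = n, invertible real matrices X, Y ∈ ℝ^{n×n}, a matrix A₁ ∈ ℝ^{r×r}, and a matrix N ∈ ℝ^{q×q} with N² = 0 such that XEY = [[I_r, 0],[0, N]] and XAY = [[A₁, 0],[0, I_q]] (block diagonal). -/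
open Matrix
open scoped ComplexOrder

/-!
Pick a real `l ≠ 0` at which `S = l E - (J - R) Q` is invertible and put `Ê = S⁻¹ E`, so that
`S⁻¹ A = l Ê - I`. Everything reduces to `ker Ê ∩ im Ê² = 0`. For a chain `w = Ê v`, `v = Ê x`
with `Ê w = 0`, the dissipative structure (`J` skew, `QᵀE = EᵀQ ⪰ 0`, `QᵀRQ ⪰ 0`) gives first
`QᵀRQ w = 0` and then `EᵀQ v = 0`. As `E` maps `ker Q` onto `ker Qᵀ` (they have equal dimension
and `ker E ∩ ker Q ⊆ ker S = 0`), `E v = E k` with `Q k = 0`; then `S k = l S w`, so `Q w = 0`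
and `w = 0`. The Fitting decomposition `im Ê² ⊕ ker Ê²` now brings `Ê` to `diag(E₁, N)` with
`E₁` invertible and `N² = 0`, and left multiplication by `diag(E₁⁻¹, (l N - I)⁻¹)` yields the
quasi-Weierstrass form.
-/

namespace Matrix

open Polynomial in
theorem finite_setOf_det_smul_sub_eq_zero {K ι : Type*} [CommRing K] [IsDomain K] [Fintype ι]
    [DecidableEq ι]
    (M N : Matrix ι ι K) (h : ∃ z : K, (z • M - N).det ≠ 0) :
    {z : K | (z • M - N).det = 0}.Finite := by
  set p : K[X] := ((X : K[X]) • M.map C - N.map C).det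
  have hp : ∀ z, p.eval z = (z • M - N).det := fun z => by
    rw [eval_det]; congr 1; ext i j; simp [mul_comm]
  obtain ⟨z, hz⟩ := h
  refine (finite_setOfPred_isRoot (p := p) fun h0 => hz ?_).subset fun w hw => ?_
  · rw [← hp, h0, eval_zero]
  · simpa [IsRoot, hp] using hw

theorem exists_det_smul_sub_ne_zero {K ι : Type*} [Field K] [Infinite K] [Fintype ι]
    [DecidableEq ι] (M N : Matrix ι ι K) (h : ∃ α β : K, (α • M - β • N).det ≠ 0) :
    ∃ z : K, (z • M - N).det ≠ 0 := by
  obtain ⟨α, β, h⟩ := h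
  by_cases hβ : β = 0
  · have hM : M.det ≠ 0 := by
      rintro hM; simp [hβ, hM] at h
    -- the reversed pencil `z • (-N) - (-M) = M - z • N` is regular at `z = 0`
    have hfin := finite_setOf_det_smul_sub_eq_zero (-N) (-M) ⟨0, by simpa using hM⟩
    obtain ⟨z, hz⟩ := (hfin.union (Set.finite_singleton 0)).exists_notMem
    simp only [Set.mem_union, Set.mem_ofPred_eq, Set.mem_singleton_iff, not_or] at hz
    refine ⟨z⁻¹, fun h0 => hz.1 ?_⟩
    have : z • -N - -M = z • (z⁻¹ • M - N) := by
      rw [smul_sub, smul_smul, mul_inv_cancel₀ hz.2, one_smul, smul_neg, sub_neg_eq_add,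
        neg_add_eq_sub]
    rw [this, det_smul, h0, mul_zero]
  · refine ⟨α / β, fun h0 => h ?_⟩
    have : α • M - β • N = β • ((α / β) • M - N) := by
      rw [smul_sub, smul_smul, mul_div_cancel₀ _ hβ]
    rw [this, det_smul, h0, mul_zero]

end Matrix

theorem toC_det {ι : Type*} [Fintype ι] [DecidableEq ι] (M : Matrix ι ι ℝ) :
    (toC M).det = M.det :=
  ((algebraMap ℝ ℂ).map_det M).symm

theorem exists_real_det_smul_sub_ne_zero {n : ℕ} (E A : Matrix (Fin n) (Fin n) ℝ)
    (hreg : ∃ α β : ℂ, (α • toC E - β • toC A).det ≠ 0) :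
    ∃ l : ℝ, l ≠ 0 ∧ (l • E - A).det ≠ 0 := by
  have hfin := (finite_setOf_det_smul_sub_eq_zero _ _
    (exists_det_smul_sub_ne_zero (toC E) (toC A) hreg)).preimage
      Complex.ofReal_injective.injOn
  obtain ⟨l, hl⟩ := (hfin.union (Set.finite_singleton 0)).exists_notMem
  simp only [Set.mem_union, Set.mem_preimage, Set.mem_ofPred_eq, Set.mem_singleton_iff,
    not_or] at hl
  refine ⟨l, hl.2, fun h0 => hl.1 ?_⟩
  have : (l : ℂ) • toC E - toC A = toC (l • E - A) := by
    ext i j; simp [toC]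
  rw [this, toC_det, h0, Complex.ofReal_zero]

namespace Matrix

open LinearMap

theorem finrank_ker_mulVecLin_transpose {K ι : Type*} [Field K] [Fintype ι]
    (Q : Matrix ι ι K) :
    Module.finrank K (ker Qᵀ.mulVecLin) = Module.finrank K (ker Q.mulVecLin) := by
  have h := (finrank_range_add_finrank_ker Qᵀ.mulVecLin).trans
    (finrank_range_add_finrank_ker Q.mulVecLin).symm
  rw [← rank, ← rank, rank_transpose] at h
  exact Nat.add_left_cancel h

theorem map_ker_mulVecLin_eq_ker_transpose {K ι : Type*} [Field K] [Fintype ι]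
    {E Q : Matrix ι ι K} (hEQ : Qᵀ * E = Eᵀ * Q)
    (hker : Disjoint (ker Q.mulVecLin) (ker E.mulVecLin)) :
    (ker Q.mulVecLin).map E.mulVecLin = ker Qᵀ.mulVecLin := by
  refine Submodule.eq_of_le_of_finrank_eq ?_ ?_
  · rintro _ ⟨k, hk, rfl⟩
    simp only [SetLike.mem_coe, mem_ker, mulVecLin_apply] at hk ⊢
    rw [mulVec_mulVec, hEQ, ← mulVec_mulVec, hk, mulVec_zero]
  · rw [finrank_ker_mulVecLin_transpose, ← range_domRestrict,
      finrank_range_of_inj (injective_domRestrict_iff.mpr hker)]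

variable {ι : Type*} [Fintype ι]

theorem dotProduct_mulVec_self_eq_zero_of_transpose_eq_neg_s2 {J : Matrix ι ι ℝ} (hJ : Jᵀ = -J)
    (y : ι → ℝ) : y ⬝ᵥ J *ᵥ y = 0 := by
  have h := dotProduct_transpose_mulVec J y y
  rw [hJ, neg_mulVec, dotProduct_neg] at h
  linarith

theorem dotProduct_transpose_mul_mul_mulVec (Q R : Matrix ι ι ℝ) (y z : ι → ℝ) :
    y ⬝ᵥ (Qᵀ * R * Q) *ᵥ z = Q *ᵥ y ⬝ᵥ R *ᵥ Q *ᵥ z := by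
  rw [Matrix.mul_assoc, ← mulVec_mulVec, dotProduct_transpose_mulVec, dotProduct_comm,
    mulVec_mulVec]

theorem PosSemidef.mulVec_eq_zero_of_dotProduct {M : Matrix ι ι ℝ} (hM : M.PosSemidef)
    {y : ι → ℝ} (h : y ⬝ᵥ M *ᵥ y = 0) : M *ᵥ y = 0 :=
  (hM.dotProduct_mulVec_zero_iff y).mp (by rwa [star_trivial])

theorem transpose_mul_eq_of_posSemidef {E Q : Matrix ι ι ℝ} (h : (Eᵀ * Q).PosSemidef) :
    Qᵀ * E = Eᵀ * Q := by
  simpa using h.isHermitian.eq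

end Matrix

section PortHamiltonian

variable {ι : Type*} [Fintype ι] {E J R Q : Matrix ι ι ℝ}

theorem transpose_mul_mulVec_eq_zero_of_chain (hJ : Jᵀ = -J) (hEQ : (Eᵀ * Q).PosSemidef)
    (hR : (Qᵀ * R * Q).PosSemidef) {l : ℝ} {x v w : ι → ℝ} (hw : E *ᵥ w = 0)
    (hv : E *ᵥ v = -((J - R) *ᵥ Q *ᵥ w)) (hx : E *ᵥ x = l • E *ᵥ v - (J - R) *ᵥ Q *ᵥ v) :
    (Eᵀ * Q) *ᵥ v = 0 := by
  have hQw_perp : ∀ y, Q *ᵥ w ⬝ᵥ E *ᵥ y = 0 := fun y => by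
    rw [← dotProduct_transpose_mulVec, mulVec_mulVec, ← transpose_mul_eq_of_posSemidef hEQ,
      ← mulVec_mulVec, hw, mulVec_zero, dotProduct_zero]
  have hJw := dotProduct_mulVec_self_eq_zero_of_transpose_eq_neg_s2 hJ (Q *ᵥ w)
  have hRw : (Qᵀ * R * Q) *ᵥ w = 0 := by
    refine hR.mulVec_eq_zero_of_dotProduct ?_
    have := hQw_perp v
    rw [hv, sub_mulVec, dotProduct_neg, dotProduct_sub] at this
    rw [dotProduct_transpose_mul_mul_mulVec]
    linarith
  have hR_symm : (Qᵀ * R * Q)ᵀ = Qᵀ * R * Q := by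
    simpa only [conjTranspose_eq_transpose_of_trivial] using hR.isHermitian.eq
  have hRvw : Q *ᵥ w ⬝ᵥ R *ᵥ Q *ᵥ v = 0 := by
    rw [← dotProduct_transpose_mul_mul_mulVec, ← dotProduct_transpose_mulVec, hR_symm, hRw,
      dotProduct_zero]
  have hJwv : Q *ᵥ w ⬝ᵥ J *ᵥ Q *ᵥ v = 0 := by
    have := hQw_perp x
    rw [hx, dotProduct_sub, dotProduct_smul, hQw_perp v, sub_mulVec, dotProduct_sub, hRvw]
      at this
    simpa using this
  refine hEQ.mulVec_eq_zero_of_dotProduct ?_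
  rw [← mulVec_mulVec, dotProduct_transpose_mulVec, hv, dotProduct_neg, sub_mulVec,
    dotProduct_sub, ← dotProduct_transpose_mulVec J, hJ, neg_mulVec, dotProduct_neg, hJwv,
    ← dotProduct_transpose_mul_mul_mulVec, hRw, dotProduct_zero]
  simp

theorem mulVec_sq_eq_zero_of_mulVec_cube_eq_zero [DecidableEq ι] (hJ : Jᵀ = -J)
    (hEQ : (Eᵀ * Q).PosSemidef) (hR : (Qᵀ * R * Q).PosSemidef) {l : ℝ} (hl : l ≠ 0)
    (hS : IsUnit (l • E - (J - R) * Q)) (x : ι → ℝ)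
    (hx : ((l • E - (J - R) * Q)⁻¹ * E) *ᵥ (((l • E - (J - R) * Q)⁻¹ * E) *ᵥ
      (((l • E - (J - R) * Q)⁻¹ * E) *ᵥ x)) = 0) :
    ((l • E - (J - R) * Q)⁻¹ * E) *ᵥ (((l • E - (J - R) * Q)⁻¹ * E) *ᵥ x) = 0 := by
  set S := l • E - (J - R) * Q
  have hS_inj := mulVec_injective_of_isUnit hS
  have hS_apply : ∀ y, S *ᵥ y = l • E *ᵥ y - (J - R) *ᵥ Q *ᵥ y := fun y => by
    rw [sub_mulVec, smul_mulVec, mulVec_mulVec]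
  have hS_inv : ∀ y, S *ᵥ ((S⁻¹ * E) *ᵥ y) = E *ᵥ y := fun y => by
    rw [mulVec_mulVec, ← Matrix.mul_assoc, mul_nonsing_inv _ ((isUnit_iff_isUnit_det S).mp hS),
      Matrix.one_mul]
  set v := (S⁻¹ * E) *ᵥ x
  set w := (S⁻¹ * E) *ᵥ v
  have hw : E *ᵥ w = 0 := by rw [← hS_inv, hx, mulVec_zero]
  have hv : E *ᵥ v = -((J - R) *ᵥ Q *ᵥ w) := by
    rw [← hS_inv v, hS_apply, hw, smul_zero, zero_sub]
  have hEQv := transpose_mul_mulVec_eq_zero_of_chain hJ hEQ hR hw hv (by rw [← hS_inv x, hS_apply])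
  have hker : Disjoint (LinearMap.ker Q.mulVecLin) (LinearMap.ker E.mulVecLin) := by
    refine Submodule.disjoint_def.mpr fun z hQz hEz => hS_inj ?_
    simp only [LinearMap.mem_ker, mulVecLin_apply] at hQz hEz
    rw [hS_apply, hQz, hEz, mulVec_zero, smul_zero, sub_zero, mulVec_zero]
  obtain ⟨k, hQk, hEk⟩ : E *ᵥ v ∈ (LinearMap.ker Q.mulVecLin).map E.mulVecLin := by
    rw [map_ker_mulVecLin_eq_ker_transpose (transpose_mul_eq_of_posSemidef hEQ) hker,
      LinearMap.mem_ker, mulVecLin_apply, mulVec_mulVec, transpose_mul_eq_of_posSemidef hEQ,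
      hEQv]
  simp only [SetLike.mem_coe, LinearMap.mem_ker, mulVecLin_apply] at hQk hEk
  have hk : k = l • w := hS_inj <| by
    rw [hS_apply, hQk, mulVec_zero, sub_zero, hEk, mulVec_smul, hS_inv]
  have hQw : Q *ᵥ w = 0 := by
    rw [hk, mulVec_smul, smul_eq_zero] at hQk
    exact hQk.resolve_left hl
  refine hS_inj ?_
  rw [hS_apply, hw, hQw, mulVec_zero, smul_zero, sub_zero, mulVec_zero]

end PortHamiltonian

namespace Module.End

open LinearMap

variable {K V : Type*} [Field K] [AddCommGroup V] [Module K V]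

theorem mapsTo_range_sq (f : Module.End K V) : ∀ x ∈ range (f ^ 2), f x ∈ range (f ^ 2) := by
  rintro _ ⟨y, rfl⟩
  exact ⟨f y, by simp only [sq, mul_apply]⟩

theorem mapsTo_ker_sq (f : Module.End K V) : ∀ x ∈ ker (f ^ 2), f x ∈ ker (f ^ 2) := by
  intro x hx
  simp only [mem_ker, sq, mul_apply] at hx ⊢
  rw [hx, map_zero]

theorem injective_restrict_range_sq {f : Module.End K V}
    (hf : ∀ x, f (f (f x)) = 0 → f (f x) = 0) :
    Function.Injective (f.restrict f.mapsTo_range_sq) := by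
  rw [← ker_eq_bot, Submodule.eq_bot_iff]
  rintro ⟨_, y, rfl⟩ hy
  simpa [sq, Subtype.ext_iff] using hf y (by simpa [sq, Subtype.ext_iff] using hy)

theorem restrict_ker_sq_mul_self (f : Module.End K V) :
    f.restrict f.mapsTo_ker_sq * f.restrict f.mapsTo_ker_sq = 0 := by
  ext ⟨x, hx⟩
  simpa [sq] using hx

theorem isCompl_range_sq_ker_sq [FiniteDimensional K V] {f : Module.End K V}
    (hf : ∀ x, f (f (f x)) = 0 → f (f x) = 0) : IsCompl (range (f ^ 2)) (ker (f ^ 2)) := by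
  refine (Submodule.isCompl_iff_disjoint _ _
    (finrank_range_add_finrank_ker (f ^ 2)).ge).mpr (Submodule.disjoint_def.mpr ?_)
  rintro _ ⟨y, rfl⟩ hy
  simp only [mem_ker, sq, mul_apply] at hy ⊢
  exact hf y (hf (f y) hy)

end Module.End

theorem LinearMap.toMatrix_basis_reindex {K U κ ι : Type*} [CommRing K] [AddCommGroup U]
    [Module K U] [Fintype κ] [DecidableEq κ] [Fintype ι] [DecidableEq ι]
    (b : Module.Basis κ K U) (e : κ ≃ ι) (g : Module.End K U) :
    LinearMap.toMatrix (b.reindex e) (b.reindex e) g =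
      reindex e e (LinearMap.toMatrix b b g) := by
  ext i j
  simp [LinearMap.toMatrix_apply]

namespace Matrix

open LinearMap Module.End

variable {K : Type*} [Field K] {n : ℕ}

theorem exists_isUnit_mul_eq_mul_reindex_toMatrix {U κ : Type*} [AddCommGroup U]
    [Module K U] [Fintype κ] [DecidableEq κ] (M : Matrix (Fin n) (Fin n) K)
    (φ : U ≃ₗ[K] Fin n → K) (g : Module.End K U) (hg : M.mulVecLin ∘ₗ φ = φ ∘ₗ g)
    (b : Module.Basis κ K U) (e : κ ≃ Fin n) :
    ∃ P : Matrix (Fin n) (Fin n) K,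
      IsUnit P ∧ M * P = P * reindex e e (LinearMap.toMatrix b b g) := by
  set std := Pi.basisFun K (Fin n)
  set b' := b.reindex e
  refine ⟨LinearMap.toMatrix b' std φ, (isUnit_iff_isUnit_det _).mpr <|
    isUnit_det_of_right_inverse (B := LinearMap.toMatrix std b' φ.symm) ?_, ?_⟩
  · rw [← LinearMap.toMatrix_comp, LinearEquiv.comp_coe, φ.symm_trans_self,
      LinearEquiv.refl_toLinearMap, LinearMap.toMatrix_id]
  · have hM : M = LinearMap.toMatrix std std M.mulVecLin := by
      rw [LinearMap.toMatrix_eq_toMatrix', ← Matrix.toLin'_apply', LinearMap.toMatrix'_toLin']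
    rw [← toMatrix_basis_reindex, hM, ← LinearMap.toMatrix_comp, hg,
      LinearMap.toMatrix_comp _ b']

theorem exists_isUnit_mul_eq_mul_fromBlocks (M : Matrix (Fin n) (Fin n) K)
    (hM : ∀ x, M *ᵥ (M *ᵥ (M *ᵥ x)) = 0 → M *ᵥ (M *ᵥ x) = 0) :
    ∃ (r q : ℕ) (hrq : r + q = n) (P : Matrix (Fin n) (Fin n) K)
      (M₁ : Matrix (Fin r) (Fin r) K) (N : Matrix (Fin q) (Fin q) K),
      IsUnit P ∧ IsUnit M₁ ∧ N * N = 0 ∧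
      M * P = P * reindex (finSumFinEquiv.trans (finCongr hrq))
        (finSumFinEquiv.trans (finCongr hrq)) (fromBlocks M₁ 0 0 N) := by
  set f := M.mulVecLin
  have hc := isCompl_range_sq_ker_sq (f := f) hM
  have hrq : Module.finrank K (range (f ^ 2)) + Module.finrank K (ker (f ^ 2)) = n := by
    rw [finrank_range_add_finrank_ker, Module.finrank_fin_fun]
  set fW := f.restrict (mapsTo_range_sq f)
  set fU := f.restrict (mapsTo_ker_sq f)
  set φ := Submodule.prodEquivOfIsCompl _ _ hc
  have hconj : f ∘ₗ φ.toLinearMap = φ.toLinearMap ∘ₗ fW.prodMap fU := by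
    refine LinearMap.ext fun ⟨w, u⟩ => ?_
    simp [φ, fW, fU]
  obtain ⟨P, hP, hMP⟩ := exists_isUnit_mul_eq_mul_reindex_toMatrix M _ _ hconj
    ((Module.finBasis K _).prod (Module.finBasis K _)) (finSumFinEquiv.trans (finCongr hrq))
  rw [toMatrix_prodMap] at hMP
  refine ⟨_, _, hrq, P, _, _, hP, ?_, ?_, hMP⟩
  · rw [isUnit_toMatrix_iff, isUnit_iff_ker_eq_bot, ker_eq_bot]
    exact injective_restrict_range_sq hM
  · rw [← toMatrix_mul, restrict_ker_sq_mul_self, map_zero]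

end Matrix

def HasIndexTwoQuasiWeierstrassForm {K : Type*} [CommRing K] {n : ℕ}
    (E A : Matrix (Fin n) (Fin n) K) : Prop :=
  ∃ (r q : ℕ) (hrq : r + q = n) (X Y : Matrix (Fin n) (Fin n) K)
    (A₁ : Matrix (Fin r) (Fin r) K) (N : Matrix (Fin q) (Fin q) K),
    IsUnit X ∧ IsUnit Y ∧ N * N = 0 ∧
    X * E * Y =
      (reindex (finSumFinEquiv.trans (finCongr hrq))
        (finSumFinEquiv.trans (finCongr hrq))) (fromBlocks 1 0 0 N) ∧
    X * A * Y =
      (reindex (finSumFinEquiv.trans (finCongr hrq))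
        (finSumFinEquiv.trans (finCongr hrq))) (fromBlocks A₁ 0 0 1)

namespace HasIndexTwoQuasiWeierstrassForm

variable {K : Type*} [CommRing K] {n : ℕ}

theorem of_mul_mul {E A X₀ Y₀ : Matrix (Fin n) (Fin n) K} (hX₀ : IsUnit X₀) (hY₀ : IsUnit Y₀)
    (h : HasIndexTwoQuasiWeierstrassForm (X₀ * E * Y₀) (X₀ * A * Y₀)) :
    HasIndexTwoQuasiWeierstrassForm E A := by
  obtain ⟨r, q, hrq, X, Y, A₁, N, hX, hY, hN, hE, hA⟩ := h
  refine ⟨r, q, hrq, X * X₀, Y₀ * Y, A₁, N, hX.mul hX₀, hY₀.mul hY, hN, ?_, ?_⟩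
  · rw [← hE]; simp only [Matrix.mul_assoc]
  · rw [← hA]; simp only [Matrix.mul_assoc]

theorem reindex_fromBlocks {r q : ℕ} (hrq : r + q = n) {M₁ : Matrix (Fin r) (Fin r) K}
    {N : Matrix (Fin q) (Fin q) K} (hM₁ : IsUnit M₁) (hN : N * N = 0) (l : K) :
    HasIndexTwoQuasiWeierstrassForm
      (reindex (finSumFinEquiv.trans (finCongr hrq)) (finSumFinEquiv.trans (finCongr hrq))
        (fromBlocks M₁ 0 0 N))
      (l • reindex (finSumFinEquiv.trans (finCongr hrq)) (finSumFinEquiv.trans (finCongr hrq))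
        (fromBlocks M₁ 0 0 N) - 1) := by
  set T := reindexAlgEquiv K K (finSumFinEquiv.trans (finCongr hrq))
  have hM₁inv : M₁⁻¹ * M₁ = 1 := nonsing_inv_mul _ ((isUnit_iff_isUnit_det M₁).mp hM₁)
  have hNinv : -(1 + l • N) * (l • N - 1) = 1 := by
    simp only [neg_mul, add_mul, one_mul, mul_sub, smul_mul_smul_comm, hN, smul_zero, mul_one]
    abel
  set D : Matrix (Fin r ⊕ Fin q) (Fin r ⊕ Fin q) K := fromBlocks M₁⁻¹ 0 0 (-(1 + l • N))
  have hDG : D * fromBlocks M₁ 0 0 N = fromBlocks 1 0 0 (-N) := by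
    simp [D, fromBlocks_multiply, hM₁inv, add_mul, hN]
  refine ⟨r, q, hrq, T D, 1, l • 1 - M₁⁻¹, -N, ?_, isUnit_one, by simp [hN], ?_, ?_⟩
  · refine (isUnit_map_iff T D).mpr (isUnit_fromBlocks_zero₂₁.mpr
      ⟨isUnit_nonsing_inv_iff.mpr hM₁, (isUnit_iff_isUnit_det _).mpr
        (isUnit_det_of_right_inverse hNinv)⟩)
  · show T D * T (fromBlocks M₁ 0 0 N) * 1 = T (fromBlocks 1 0 0 (-N))
    rw [mul_one, ← map_mul, hDG]
  · show T D * (l • T (fromBlocks M₁ 0 0 N) - 1) * 1 = T (fromBlocks (l • 1 - M₁⁻¹) 0 0 1)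
    rw [mul_one, mul_sub, mul_smul_comm, ← map_mul, hDG, mul_one, ← map_smul, ← map_sub]
    congr 1
    ext (i | i) (j | j) <;> simp [D]

theorem of_similar {E S P : Matrix (Fin n) (Fin n) K} {r q : ℕ} (hrq : r + q = n)
    {M₁ : Matrix (Fin r) (Fin r) K} {N : Matrix (Fin q) (Fin q) K} (hS : IsUnit S)
    (hP : IsUnit P) (hM₁ : IsUnit M₁) (hN : N * N = 0)
    (hEP : S⁻¹ * E * P = P * reindex (finSumFinEquiv.trans (finCongr hrq))
      (finSumFinEquiv.trans (finCongr hrq)) (fromBlocks M₁ 0 0 N)) (l : K) :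
    HasIndexTwoQuasiWeierstrassForm E (l • E - S) := by
  have hSinv : S⁻¹ * S = 1 := nonsing_inv_mul _ ((isUnit_iff_isUnit_det S).mp hS)
  have hPinv : P⁻¹ * P = 1 := nonsing_inv_mul _ ((isUnit_iff_isUnit_det P).mp hP)
  have hE : P⁻¹ * S⁻¹ * E * P = reindex (finSumFinEquiv.trans (finCongr hrq))
      (finSumFinEquiv.trans (finCongr hrq)) (fromBlocks M₁ 0 0 N) := by
    rw [Matrix.mul_assoc P⁻¹, Matrix.mul_assoc P⁻¹, hEP,
      ← Matrix.mul_assoc, hPinv, Matrix.one_mul]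
  refine of_mul_mul ((isUnit_nonsing_inv_iff.mpr hP).mul (isUnit_nonsing_inv_iff.mpr hS)) hP ?_
  have hA : P⁻¹ * S⁻¹ * (l • E - S) * P = l • (P⁻¹ * S⁻¹ * E * P) - 1 := by
    rw [Matrix.mul_sub, Matrix.sub_mul, Matrix.mul_smul, Matrix.smul_mul,
      Matrix.mul_assoc P⁻¹ S⁻¹ S, hSinv, Matrix.mul_one, hPinv]
  rw [hA, hE]
  exact reindex_fromBlocks hrq hM₁ hN l

end HasIndexTwoQuasiWeierstrassForm

/-- A regular pH pencil has index at most two: it admits a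
quasi-Weierstrass form `X E Y = diag(I, N)`, `X A Y = diag(A₁, I)` with `N² = 0`. -/
theorem pH_index_at_most_two {n : ℕ}
    (E J R Q : Matrix (Fin n) (Fin n) ℝ)
    (hJ : Jᵀ = -J) (hEQ : (Eᵀ * Q).PosSemidef) (hR : (Qᵀ * R * Q).PosSemidef)
    (hreg : ∃ α β : ℂ, (α • toC E - β • toC ((J - R) * Q)).det ≠ 0) :
    ∃ (r q : ℕ) (hrq : r + q = n) (X Y : Matrix (Fin n) (Fin n) ℝ)
      (A₁ : Matrix (Fin r) (Fin r) ℝ) (N : Matrix (Fin q) (Fin q) ℝ),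
      IsUnit X ∧ IsUnit Y ∧ N * N = 0 ∧
      X * E * Y =
        (reindex (finSumFinEquiv.trans (finCongr hrq))
          (finSumFinEquiv.trans (finCongr hrq))) (fromBlocks 1 0 0 N) ∧
      X * ((J - R) * Q) * Y =
        (reindex (finSumFinEquiv.trans (finCongr hrq))
          (finSumFinEquiv.trans (finCongr hrq))) (fromBlocks A₁ 0 0 1) := by
  obtain ⟨l, hl, hdet⟩ := exists_real_det_smul_sub_ne_zero E _ hreg
  have hS : IsUnit (l • E - (J - R) * Q) := (isUnit_iff_isUnit_det _).mpr hdet.isUnit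
  obtain ⟨r, q, hrq, P, M₁, N, hP, hM₁, hN, hEP⟩ := exists_isUnit_mul_eq_mul_fromBlocks _
    (mulVec_sq_eq_zero_of_mulVec_cube_eq_zero hJ hEQ hR hl hS)
  rw [← sub_sub_cancel (l • E) ((J - R) * Q)]
  exact HasIndexTwoQuasiWeierstrassForm.of_similar hrq hS hP hM₁ hN hEP l
end

section
/- If a descriptor system (E,A,B,C,D) is port-Hamiltonian with pH decomposition matrices J, R, Q ∈ ℝ^{n×n} and G, P ∈ ℝ^{n×m}, then this matrix Q satisfies the KYP inequality: the matrix [[A^T Q + Q^T A, Q^T B − C^T],[B^T Q − C, −D − D^T]] is negative semidefinite (and E^T Q is symmetric positive semidefinite). -/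
open Matrix
open scoped ComplexOrder

/-!
Substituting the pH decomposition, the skew-symmetric `J` cancels in `AᵀQ + QᵀA`, and
`-KYPmatrix A B C D Q` becomes `W + Wᵀ` for the positive semidefinite block matrix `W`
of the pH decomposition, and positive semidefiniteness survives transposition and sums.
-/

noncomputable def dissipationMatrix {n m : ℕ} (R Q : Matrix (Fin n) (Fin n) ℝ)
    (P : Matrix (Fin n) (Fin m) ℝ) (D : Matrix (Fin m) (Fin m) ℝ) : Matrix (Fin n ⊕ Fin m) (Fin n ⊕ Fin m) ℝ :=
  fromBlocks (Qᵀ * R * Q) (Qᵀ * P) (Pᵀ * Q) ((1/2 : ℝ) • (D + Dᵀ))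

theorem transpose_mul_add_transpose_mul_of_skew {ι α : Type*} [Fintype ι] [CommRing α]
    {J R Q : Matrix ι ι α} (hJ : Jᵀ = -J) :
    ((J - R) * Q)ᵀ * Q + Qᵀ * ((J - R) * Q) = -(Qᵀ * R * Q + (Qᵀ * R * Q)ᵀ) := by
  simp only [transpose_mul, transpose_sub, hJ, transpose_transpose]
  noncomm_ring

theorem neg_KYPmatrix_eq_dissipationMatrix_add_transpose {n m : ℕ}
    (J R Q : Matrix (Fin n) (Fin n) ℝ) (G P : Matrix (Fin n) (Fin m) ℝ)
    (D : Matrix (Fin m) (Fin m) ℝ) (hJ : Jᵀ = -J) :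
    -KYPmatrix ((J - R) * Q) (G - P) ((G + P)ᵀ * Q) D Q
      = dissipationMatrix R Q P D + (dissipationMatrix R Q P D)ᵀ := by
  have h12 : -(Qᵀ * (G - P) - ((G + P)ᵀ * Q)ᵀ) = Qᵀ * P + (Pᵀ * Q)ᵀ := by
    simp only [transpose_mul, transpose_add, transpose_transpose, Matrix.mul_sub,
      Matrix.mul_add]
    abel
  have h21 : -((G - P)ᵀ * Q - (G + P)ᵀ * Q) = Pᵀ * Q + (Qᵀ * P)ᵀ := by
    simp only [transpose_mul, transpose_add, transpose_sub, transpose_transpose,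
      Matrix.sub_mul, Matrix.add_mul]
    abel
  have h22 : -(-D - Dᵀ) = (1/2 : ℝ) • (D + Dᵀ) + ((1/2 : ℝ) • (D + Dᵀ))ᵀ := by
    rw [transpose_smul, transpose_add, transpose_transpose, add_comm Dᵀ, ← two_smul ℝ,
      smul_smul]
    norm_num [add_comm]
  rw [KYPmatrix, dissipationMatrix, fromBlocks_transpose, fromBlocks_add, fromBlocks_neg,
    transpose_mul_add_transpose_mul_of_skew hJ, neg_neg, h12, h21, h22]

/-- For a pH system, the pH matrix `Q` satisfies the KYP inequality. -/
theorem pH_implies_KYP {n m : ℕ}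
    (E A J R Q : Matrix (Fin n) (Fin n) ℝ)
    (B G P : Matrix (Fin n) (Fin m) ℝ)
    (C : Matrix (Fin m) (Fin n) ℝ) (D : Matrix (Fin m) (Fin m) ℝ)
    (hA : A = (J - R) * Q) (hB : B = G - P) (hC : C = (G + P)ᵀ * Q)
    (hJ : Jᵀ = -J) (hEQ : (Eᵀ * Q).PosSemidef)
    (hblock : (fromBlocks (Qᵀ * R * Q) (Qᵀ * P) (Pᵀ * Q)
      ((1/2 : ℝ) • (D + Dᵀ))).PosSemidef) :
    (-(KYPmatrix A B C D Q)).PosSemidef ∧ (Eᵀ * Q).PosSemidef := by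
  refine ⟨?_, hEQ⟩
  subst hA hB hC
  rw [neg_KYPmatrix_eq_dissipationMatrix_add_transpose J R Q G P D hJ]
  exact hblock.add hblock.transpose
end

section
/- If for a descriptor system (E,A,B,C,D) there exists an invertible matrix Q ∈ ℝ^{n×n} such that the matrix [[A^T Q + Q^T A, Q^T B − C^T],[B^T Q − C, −D − D^T]] is negative semidefinite and E^T Q is symmetric positive semidefinite, then the system (E,A,B,C,D) is port-Hamiltonian. -/
open Matrix
open scoped ComplexOrder

/-! Invertibility of `Q` factors `A = X Q` and `C = Y Q` with `X = A Q⁻¹`, `Y = C Q⁻¹`.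
Take `J` and `-R` to be the skew-symmetric and symmetric parts of `X`, and `G, P = (Yᵀ ± B) / 2`;
then the dissipation block of the pH structure is exactly half of minus the KYP matrix. -/

theorem isPortHamiltonian_of_kyp_of_eq_mul {n m : ℕ}
    {E A X Q : Matrix (Fin n) (Fin n) ℝ} {B : Matrix (Fin n) (Fin m) ℝ}
    {C Y : Matrix (Fin m) (Fin n) ℝ} {D : Matrix (Fin m) (Fin m) ℝ}
    (hA : A = X * Q) (hC : C = Y * Q)
    (hkyp : (-(KYPmatrix A B C D Q)).PosSemidef) (hEQ : (Eᵀ * Q).PosSemidef) :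
    IsPortHamiltonian E A B C D := by
  subst hA hC
  refine ⟨(2⁻¹ : ℝ) • (X - Xᵀ), -((2⁻¹ : ℝ) • (X + Xᵀ)), Q, (2⁻¹ : ℝ) • (Yᵀ + B),
    (2⁻¹ : ℝ) • (Yᵀ - B), ?_, ?_, ?_, ?_, hEQ, ?_⟩
  · congr 1; module
  · module
  · rw [show (2⁻¹ : ℝ) • (Yᵀ + B) + (2⁻¹ : ℝ) • (Yᵀ - B) = Yᵀ by module, transpose_transpose]
  · rw [transpose_smul, transpose_sub, transpose_transpose, ← smul_neg, neg_sub]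
  · convert hkyp.smul (show (0 : ℝ) ≤ 2⁻¹ by norm_num) using 1
    simp only [KYPmatrix, fromBlocks_neg, fromBlocks_smul, transpose_mul, transpose_smul,
      transpose_sub, transpose_transpose, Matrix.mul_smul, Matrix.smul_mul, Matrix.mul_add,
      Matrix.add_mul, Matrix.mul_sub, Matrix.sub_mul, Matrix.mul_neg, Matrix.neg_mul,
      Matrix.mul_assoc]
    congr 1 <;> module

/-- If an invertible `Q` satisfies the KYP inequality with `EᵀQ ≥ 0`, then
the descriptor system is port-Hamiltonian. -/
theorem KYP_invertible_implies_pH {n m : ℕ}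
    (E A : Matrix (Fin n) (Fin n) ℝ) (B : Matrix (Fin n) (Fin m) ℝ)
    (C : Matrix (Fin m) (Fin n) ℝ) (D : Matrix (Fin m) (Fin m) ℝ)
    (Q : Matrix (Fin n) (Fin n) ℝ) (hQ : IsUnit Q)
    (hkyp : (-(KYPmatrix A B C D Q)).PosSemidef)
    (hEQ : (Eᵀ * Q).PosSemidef) :
    IsPortHamiltonian E A B C D := by
  have hdet : IsUnit Q.det := (isUnit_iff_isUnit_det Q).mp hQ
  exact isPortHamiltonian_of_kyp_of_eq_mul (nonsing_inv_mul_cancel_right Q A hdet).symm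
    (nonsing_inv_mul_cancel_right Q C hdet).symm hkyp hEQ
end

section
/- A positive real system that is not port-Hamiltonian: the descriptor system with E = [[1,0],[0,0]], A = [[−1,0],[0,−1]], B = [1;1], C = [1,1], D = −1 (n = 2, m = 1) is positive real (indeed det(sE−A) = s+1 ≠ 0 and T(s) + conj(T(s)) = 2·Re(1/(s+1)) ≥ 0 for Re(s) > 0), but it is not port-Hamiltonian. -/
open Matrix
open scoped ComplexOrder

/-! The algebraic second state contributes the constant `1` to `C (sE - A)⁻¹ B`, which cancels
`D = -1`, so `T(s) = 1/(s+1)` has nonnegative real part on the right half-plane. A pH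
realization, however, needs the symmetric part of `D` to be positive semidefinite, since it is
the lower-right block of the dissipation matrix, and `D = -1` is not. -/

theorem Matrix.PosSemidef.of_fromBlocks₂₂ {R m n : Type*} [Ring R] [PartialOrder R] [StarRing R]
    {A : Matrix m m R} {B : Matrix m n R} {C : Matrix n m R} {D : Matrix n n R}
    (h : (fromBlocks A B C D).PosSemidef) : D.PosSemidef :=
  h.submatrix Sum.inr

theorem IsPortHamiltonian.posSemidef_symmPart {n m : ℕ} {E A : Matrix (Fin n) (Fin n) ℝ}
    {B : Matrix (Fin n) (Fin m) ℝ} {C : Matrix (Fin m) (Fin n) ℝ} {D : Matrix (Fin m) (Fin m) ℝ}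
    (h : IsPortHamiltonian E A B C D) : ((1/2 : ℝ) • (D + Dᵀ)).PosSemidef := by
  obtain ⟨_, _, _, _, _, _, _, _, _, _, hW⟩ := h
  exact Matrix.PosSemidef.of_fromBlocks₂₂ hW

theorem not_isPortHamiltonian_of_diag_neg {n m : ℕ} {E A : Matrix (Fin n) (Fin n) ℝ}
    {B : Matrix (Fin n) (Fin m) ℝ} {C : Matrix (Fin m) (Fin n) ℝ} {D : Matrix (Fin m) (Fin m) ℝ}
    {i : Fin m} (hD : D i i < 0) : ¬ IsPortHamiltonian E A B C D := fun h => by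
  have := h.posSemidef_symmPart.diag_nonneg (i := i)
  simp only [Matrix.smul_apply, Matrix.add_apply, transpose_apply, smul_eq_mul] at this
  linarith

theorem Complex.re_inv_nonneg {z : ℂ} (hz : 0 ≤ z.re) : 0 ≤ z⁻¹.re := by
  rw [Complex.inv_re]
  exact div_nonneg hz (Complex.normSq_nonneg z)

theorem posSemidef_add_conjTranspose_fin_one {z : ℂ} (hz : 0 ≤ z.re) :
    (!![z] + !![z]ᴴ).PosSemidef := by
  have hdiag : !![z] + !![z]ᴴ = diagonal fun _ => ((2 * z.re : ℝ) : ℂ) := by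
    ext i j
    fin_cases i; fin_cases j
    simp [Complex.add_conj]
  rw [hdiag, posSemidef_diagonal_iff]
  intro
  exact Complex.zero_le_real.mpr (by positivity)

theorem pencil_example (s : ℂ) :
    pencil (!![1, 0; 0, 0] : Matrix (Fin 2) (Fin 2) ℝ) !![-1, 0; 0, -1] s = !![s + 1, 0; 0, 1] := by
  ext i j
  fin_cases i <;> fin_cases j <;> simp [pencil, toC]

theorem transfer_example {s : ℂ} (hs : s + 1 ≠ 0) :
    transfer (!![1, 0; 0, 0] : Matrix (Fin 2) (Fin 2) ℝ) !![-1, 0; 0, -1]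
      !![(1 : ℝ); 1] !![(1 : ℝ), 1] !![(-1 : ℝ)] s = !![(s + 1)⁻¹] := by
  rw [transfer, pencil_example, inv_def, det_fin_two_of, adjugate_fin_two_of]
  ext i j
  fin_cases i; fin_cases j
  simp [toC, mul_apply, Fin.sum_univ_two, inv_mul_cancel₀ hs]

/-- The descriptor system `E = [[1,0],[0,0]]`, `A = -I₂`, `B = [1;1]`,
`C = [1,1]`, `D = -1` is positive real but not port-Hamiltonian. -/
theorem example_positive_real_not_pH :
    PositiveReal (!![1, 0; 0, 0] : Matrix (Fin 2) (Fin 2) ℝ) !![-1, 0; 0, -1]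
      !![(1 : ℝ); 1] !![(1 : ℝ), 1] !![(-1 : ℝ)] ∧
    ¬ IsPortHamiltonian (!![1, 0; 0, 0] : Matrix (Fin 2) (Fin 2) ℝ) !![-1, 0; 0, -1]
      !![(1 : ℝ); 1] !![(1 : ℝ), 1] !![(-1 : ℝ)] := by
  constructor
  · intro s hs
    have hre : 0 < (s + 1).re := by simp only [Complex.add_re, Complex.one_re]; linarith
    have hs1 : s + 1 ≠ 0 := fun h => by simp [h] at hre
    constructor
    · rw [pencil_example, det_fin_two_of]
      simpa using hs1
    · rw [transfer_example hs1]
      exact posSemidef_add_conjTranspose_fin_one (Complex.re_inv_nonneg hre.le)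
  · exact not_isPortHamiltonian_of_diag_neg (i := 0) (by simp)
end
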